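/- arXiv:1508.03148 — 4 statements merged into one kernel-verified Lean document; each statement's English description precedes it below -/
import Mathlib

section
/- (Representer theorem, Theorem 1 / Appendix B.) Assume γ_k > 0 and γ_M ≥ 0, and let L be an arbitrary real N×N matrix. If f* ∈ H is a minimizer of the manifold-regularized objective, i.e. J(f*) ≤ J(f) for every f ∈ H, then f* lies in the linear span of {k₁, …, k_N}; equivalently, there exist real coefficients a₁, …, a_N with f* = Σ_{i=1}^N aᵢ·kᵢ. -/
/-!
Project a minimizer `f` onto the span `K` of the kernel sections. The data-fit and manifold terms
only see `f` through its inner products with the `kᵢ`, which the projection preserves, while by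
Pythagoras the projection `P` lowers `‖f‖²` by `‖f - P f‖²`. Minimality and `γ_k > 0` force this
defect to vanish, so `f = P f ∈ K`.
-/

open RealInnerProductSpace

namespace Submodule

variable {H : Type*} [NormedAddCommGroup H] [InnerProductSpace ℝ H]
  (K : Submodule ℝ H) [K.HasOrthogonalProjection]

lemma inner_starProjection_left_of_mem (f : H) {x : H} (hx : x ∈ K) :
    ⟪K.starProjection f, x⟫ = ⟪f, x⟫ := by
  rw [inner_starProjection_left_eq_right, starProjection_eq_self_iff.mpr hx]

theorem mem_of_minimizes_add_norm_sq {Φ : H → ℝ}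
    (hΦ : ∀ f g : H, (∀ x ∈ K, ⟪f, x⟫ = ⟪g, x⟫) → Φ f = Φ g)
    {γ : ℝ} (hγ : 0 < γ) {f : H} (hmin : ∀ g : H, Φ f + γ * ‖f‖ ^ 2 ≤ Φ g + γ * ‖g‖ ^ 2) :
    f ∈ K := by
  have hΦP : Φ (K.starProjection f) = Φ f :=
    hΦ _ _ fun x hx => K.inner_starProjection_left_of_mem f hx
  have hpyth := norm_sq_eq_add_norm_sq_starProjection f K
  have hdefect : ‖Kᗮ.starProjection f‖ ^ 2 ≤ 0 := by
    nlinarith [hmin (K.starProjection f)]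
  have hzero : Kᗮ.starProjection f = 0 := by
    simpa using le_antisymm hdefect (sq_nonneg _)
  rwa [starProjection_apply_eq_zero_iff, orthogonal_orthogonal] at hzero

end Submodule

theorem stmt_0_general {H : Type*} [NormedAddCommGroup H] [InnerProductSpace ℝ H]
    (N l : ℕ) (hlN : l ≤ N)
    (k : Fin N → H) (p : Fin l → ℝ) (L : Matrix (Fin N) (Fin N) ℝ)
    (γk γM : ℝ) (hγk : 0 < γk)
    (J : H → ℝ)
    (hJ : ∀ f : H, J f =
        (1 / (l : ℝ)) * ∑ i : Fin l, (p i - ⟪f, k (Fin.castLE hlN i)⟫) ^ 2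
        + γk * ⟪f, f⟫
        + γM * ∑ i : Fin N, ∑ j : Fin N, L i j * ⟪f, k i⟫ * ⟪f, k j⟫)
    (fstar : H) (hmin : ∀ f : H, J fstar ≤ J f) :
    ∃ a : Fin N → ℝ, fstar = ∑ i : Fin N, a i • k i := by
  set K := Submodule.span ℝ (Set.range k)
  have : FiniteDimensional ℝ K := FiniteDimensional.span_of_finite ℝ (Set.finite_range k)
  have hmem : fstar ∈ K := by
    refine K.mem_of_minimizes_add_norm_sq (Φ := fun f => J f - γk * ‖f‖ ^ 2) ?_ hγk
      fun g => by simpa only [sub_add_cancel] using hmin g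
    intro f g hfg
    have hk : ∀ i, ⟪f, k i⟫ = ⟪g, k i⟫ := fun i => hfg _ (Submodule.subset_span ⟨i, rfl⟩)
    simp only [hJ, hk, real_inner_self_eq_norm_sq]
    ring
  obtain ⟨a, ha⟩ := (Submodule.mem_span_range_iff_exists_fun ℝ).mp hmem
  exact ⟨a, ha.symm⟩

/-- Representer theorem (Theorem 1 / Appendix B): a minimizer of the
manifold-regularized objective lies in the span of the kernel sections. -/
theorem stmt_0 {H : Type*} [NormedAddCommGroup H] [InnerProductSpace ℝ H]
    (N l : ℕ) (hl : 1 ≤ l) (hlN : l ≤ N)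
    (k : Fin N → H) (p : Fin l → ℝ) (L : Matrix (Fin N) (Fin N) ℝ)
    (γk γM : ℝ) (hγk : 0 < γk) (hγM : 0 ≤ γM)
    (J : H → ℝ)
    (hJ : ∀ f : H, J f =
        (1 / (l : ℝ)) * ∑ i : Fin l, (p i - ⟪f, k (Fin.castLE hlN i)⟫) ^ 2
        + γk * ⟪f, f⟫
        + γM * ∑ i : Fin N, ∑ j : Fin N, L i j * ⟪f, k i⟫ * ⟪f, k j⟫)
    (fstar : H) (hmin : ∀ f : H, J fstar ≤ J f) :
    ∃ a : Fin N → ℝ, fstar = ∑ i : Fin N, a i • k i :=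
  stmt_0_general N l hlN k p L γk γM hγk J hJ fstar hmin
end

section
/- (Key lemma in the proof of the Representer theorem.) Let U = span{k₁,…,k_N} and for f ∈ H let f∥ denote the orthogonal projection of f onto U. Then: (i) ⟪f, kⱼ⟫ = ⟪f∥, kⱼ⟫ for every j = 1,…,N, so all three terms of J other than the norm term are unchanged when f is replaced by f∥; (ii) if γ_k ≥ 0 then J(f∥) ≤ J(f); and (iii) if γ_k > 0 and f ∉ U then J(f∥) < J(f). -/
open RealInnerProductSpace

/-- Key lemma in the proof of the Representer theorem: replacing `f` by its
orthogonal projection `fpar` onto `U = span{k₁,…,k_N}` leaves all kernel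
evaluations unchanged, does not increase the objective when `γk ≥ 0`, and
strictly decreases it when `γk > 0` and `f ∉ U`. -/
theorem stmt_1 {H : Type*} [NormedAddCommGroup H] [InnerProductSpace ℝ H]
    (N l : ℕ) (hl : 1 ≤ l) (hlN : l ≤ N)
    (k : Fin N → H) (p : Fin l → ℝ) (L : Matrix (Fin N) (Fin N) ℝ)
    (γk γM : ℝ)
    (J : H → ℝ)
    (hJ : ∀ f : H, J f =
        (1 / (l : ℝ)) * ∑ i : Fin l, (p i - ⟪f, k (Fin.castLE hlN i)⟫) ^ 2
        + γk * ⟪f, f⟫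
        + γM * ∑ i : Fin N, ∑ j : Fin N, L i j * ⟪f, k i⟫ * ⟪f, k j⟫)
    (f fpar : H)
    (hmem : fpar ∈ Submodule.span ℝ (Set.range k))
    (horth : f - fpar ∈ (Submodule.span ℝ (Set.range k))ᗮ) :
    (∀ j : Fin N, ⟪f, k j⟫ = ⟪fpar, k j⟫) ∧
    (0 ≤ γk → J fpar ≤ J f) ∧
    (0 < γk → f ∉ Submodule.span ℝ (Set.range k) → J fpar < J f) := by
  have hk : ∀ j : Fin N, ⟪f, k j⟫ = ⟪fpar, k j⟫ := by
    intro j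
    have h0 : ⟪f - fpar, k j⟫ = 0 :=
      (Submodule.mem_orthogonal' _ _).mp horth (k j)
        (Submodule.subset_span ⟨j, rfl⟩)
    have := inner_sub_left (𝕜 := ℝ) f fpar (k j)
    linarith [this ▸ h0]
  have hfp : ⟪fpar, f - fpar⟫ = 0 :=
    (Submodule.mem_orthogonal _ _).mp horth fpar hmem
  have hd : ⟪f, f⟫ = ⟪fpar, fpar⟫ + ⟪f - fpar, f - fpar⟫ := by
    have h1 : f = fpar + (f - fpar) := by abel
    have h2 : ⟪f - fpar, fpar⟫ = 0 := by
      rw [real_inner_comm]; exact hfp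
    set d := f - fpar with hdd
    rw [h1, inner_add_left, inner_add_right, inner_add_right, hfp, h2]
    ring
  have hdiff : J f = J fpar + γk * ⟪f - fpar, f - fpar⟫ := by
    rw [hJ f, hJ fpar]
    simp only [hk, hd]
    ring
  have hnn : 0 ≤ ⟪f - fpar, f - fpar⟫ := real_inner_self_nonneg
  refine ⟨hk, fun hγ => ?_, fun hγ hf => ?_⟩
  · nlinarith
  · have hne : f - fpar ≠ 0 := by
      intro h
      apply hf
      have : f = fpar := by
        have := sub_eq_zero.mp h; exact this
      rw [this]; exact hmem
    have hpos : 0 < ⟪f - fpar, f - fpar⟫ :=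
      lt_of_le_of_ne hnn (Ne.symm (inner_self_ne_zero.mpr hne))
    nlinarith
end

section
/- (Invertibility of the system matrix in eq. (19).) Suppose K and L are symmetric positive semidefinite real N×N matrices, γ_k > 0, γ_M ≥ 0, and l ≥ 1. Then the matrix J K + l·γ_k·I_N + l·γ_M·L K is invertible, so the interpolation weights a* = (J K + l·γ_k·I_N + l·γ_M·L K)^{-1} q are well defined. -/
/-!
Write the system matrix as `A K + lγₖ I` with `A = J + lγ_M L` positive semidefinite. If
`(A K + c I) v = 0` with `c > 0`, pairing `A (K v) = -c v` with `K v` gives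
`0 ≤ ⟪K v, A K v⟫ = -c ⟪v, K v⟫ ≤ 0`, so `⟪v, K v⟫ = 0`, hence `K v = 0` and then `v = 0`.
-/

open Matrix
open scoped ComplexOrder

namespace Matrix.PosSemidef

variable {n 𝕜 : Type*} [Fintype n] [RCLike 𝕜] {A K : Matrix n n 𝕜}

theorem mulVec_eq_zero_of_mulVec_mulVec_eq_neg_smul (hA : A.PosSemidef) (hK : K.PosSemidef)
    {c : ℝ} (hc : 0 < c) {v : n → 𝕜} (hv : A *ᵥ K *ᵥ v = -(c • v)) : K *ᵥ v = 0 := by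
  set s := star v ⬝ᵥ K *ᵥ v
  have hs : 0 ≤ s := hK.dotProduct_mulVec_nonneg v
  have hpair : star (K *ᵥ v) ⬝ᵥ A *ᵥ K *ᵥ v = -((c : 𝕜) * s) := by
    rw [hv, dotProduct_neg, dotProduct_smul, star_dotProduct, hs.isSelfAdjoint.star_eq,
      RCLike.real_smul_eq_coe_mul]
  have hcs : 0 ≤ (c : 𝕜) * s := mul_nonneg (RCLike.ofReal_nonneg.mpr hc.le) hs
  have hcs' : (c : 𝕜) * s ≤ 0 := by
    simpa only [hpair, neg_nonneg] using hA.dotProduct_mulVec_nonneg (K *ᵥ v)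
  have hs0 : s = 0 := by
    simpa [hc.ne'] using le_antisymm hcs' hcs
  exact (hK.dotProduct_mulVec_zero_iff v).mp hs0

theorem isUnit_mul_add_smul_one [DecidableEq n] (hA : A.PosSemidef) (hK : K.PosSemidef)
    {c : ℝ} (hc : 0 < c) : IsUnit (A * K + c • (1 : Matrix n n 𝕜)) := by
  refine mulVec_injective_iff_isUnit.mp <| (injective_iff_map_eq_zero (mulVecLin _)).mpr ?_
  intro v hv
  have hv' : A *ᵥ K *ᵥ v = -(c • v) := by
    simpa [add_mulVec, smul_mulVec, ← mulVec_mulVec, add_eq_zero_iff_eq_neg] using hv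
  have hKv := mulVec_eq_zero_of_mulVec_mulVec_eq_neg_smul hA hK hc hv'
  simpa [hKv, hc.ne'] using hv'

end Matrix.PosSemidef

theorem stmt_9_general (N l : ℕ) (hl : 1 ≤ l)
    (K L : Matrix (Fin N) (Fin N) ℝ) (hK : K.PosSemidef) (hL : L.PosSemidef)
    (γk γM : ℝ) (hγk : 0 < γk) (hγM : 0 ≤ γM)
    (Jm : Matrix (Fin N) (Fin N) ℝ)
    (hJm : Jm = Matrix.diagonal (fun i : Fin N => if (i : ℕ) < l then (1 : ℝ) else 0)) :
    IsUnit (Jm * K + ((l : ℝ) * γk) • (1 : Matrix (Fin N) (Fin N) ℝ)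
        + ((l : ℝ) * γM) • (L * K)) := by
  have hJ : Jm.PosSemidef := hJm ▸ posSemidef_diagonal_iff.mpr fun i => by split_ifs <;> norm_num
  have hA : (Jm + ((l : ℝ) * γM) • L).PosSemidef := hJ.add (hL.smul (by positivity))
  have hc : 0 < (l : ℝ) * γk := mul_pos (Nat.cast_pos.mpr hl) hγk
  convert hA.isUnit_mul_add_smul_one hK hc using 1
  rw [add_mul, smul_mul_assoc]
  abel

/-- Invertibility of the system matrix in eq. (19): for `K`, `L` symmetric
positive semidefinite, `γₖ > 0`, `γ_M ≥ 0` and `l ≥ 1`, the matrix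
`JK + lγₖ I + lγ_M LK` is invertible. -/
theorem stmt_9 (N l : ℕ) (hl : 1 ≤ l) (hlN : l ≤ N)
    (K L : Matrix (Fin N) (Fin N) ℝ) (hK : K.PosSemidef) (hL : L.PosSemidef)
    (γk γM : ℝ) (hγk : 0 < γk) (hγM : 0 ≤ γM)
    (Jm : Matrix (Fin N) (Fin N) ℝ)
    (hJm : Jm = Matrix.diagonal (fun i : Fin N => if (i : ℕ) < l then (1 : ℝ) else 0)) :
    IsUnit (Jm * K + ((l : ℝ) * γk) • (1 : Matrix (Fin N) (Fin N) ℝ)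
        + ((l : ℝ) * γM) • (L * K)) :=
  stmt_9_general N l hl K L hK hL γk γM hγk hγM Jm hJm
end

section
/- (Correctness of the MRL estimator, combining the Representer theorem with eqs. (19)–(20).) Let K be the Gram matrix K_{ij} = ⟪kᵢ, kⱼ⟫, let L ∈ ℝ^{N×N}in addition be symmetric positive semidefinite, let γ_k > 0, γ_M ≥ 0, let q ∈ ℝ^N have qᵢ = pᵢ for i ≤ l and qᵢ = 0 for i > l, and let J be the diagonal 0/1 indicator matrix of the first l coordinates. If a* ∈ ℝ^N satisfies (J K + l·γ_k·I_N + l·γ_M·L K)·a* = q, then f* = Σ_{i=1}^N a*ᵢ·kᵢ is a global minimizer of the objective over the whole space: J(f*) ≤ J(f) for every f ∈ H. -/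
open Matrix RealInnerProductSpace

/-!
Write `f = f⋆ + g`. The objective is quadratic in `f`, so its value at `f⋆ + g` is its value at
`f⋆`, plus twice the first variation at `f⋆` in the direction `g`, plus the objective with zero
labels evaluated at `g`; the last term is nonnegative because the residual weights and `L` are
positive semidefinite. Since `⟪f⋆, g⟫ = a⋆ ⬝ᵥ (⟪g, kᵢ⟫)ᵢ`, the first variation pairs
`γₖ a⋆ + γ_M L u - l⁻¹ J (q - u)`, where `u = K a⋆`, with `(⟪g, kᵢ⟫)ᵢ`, and the linear system
for `a⋆` says exactly that this vector vanishes (as `J q = q`).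
-/

section Kernel

variable {H : Type*} [NormedAddCommGroup H] [InnerProductSpace ℝ H] {n : Type*}

def kernelEval (k : n → H) (f : H) : n → ℝ := fun i => ⟪f, k i⟫

lemma kernelEval_add (k : n → H) (f g : H) :
    kernelEval k (f + g) = kernelEval k f + kernelEval k g :=
  funext fun _ => inner_add_left _ _ _

variable [Fintype n]

lemma inner_sum_smul_eq_dotProduct_kernelEval (k : n → H) (a : n → ℝ) (g : H) :
    ⟪∑ i, a i • k i, g⟫ = a ⬝ᵥ kernelEval k g := by
  simp only [sum_inner, real_inner_smul_left, dotProduct, kernelEval]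
  exact Finset.sum_congr rfl fun i _ => by rw [real_inner_comm]

lemma kernelEval_sum_smul (k : n → H) (a : n → ℝ) :
    kernelEval k (∑ i, a i • k i) = gram ℝ k *ᵥ a := by
  ext j
  simp only [kernelEval, sum_inner, real_inner_smul_left, mulVec, dotProduct, gram, of_apply]
  exact Finset.sum_congr rfl fun i _ => by rw [real_inner_comm, mul_comm]

end Kernel

theorem Matrix.IsSymm.add_dotProduct_mulVec_add {R n : Type*} [CommRing R] [Fintype n]
    {M : Matrix n n R} (hM : M.IsSymm) (x y : n → R) :
    (x + y) ⬝ᵥ M *ᵥ (x + y) = x ⬝ᵥ M *ᵥ x + 2 * (M *ᵥ x ⬝ᵥ y) + y ⬝ᵥ M *ᵥ y := by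
  have hxy : x ⬝ᵥ M *ᵥ y = M *ᵥ x ⬝ᵥ y := by
    rw [dotProduct_mulVec, ← mulVec_transpose, hM.eq]
  rw [mulVec_add, dotProduct_add, add_dotProduct, add_dotProduct, hxy, dotProduct_comm y (M *ᵥ x)]
  ring

lemma Fin.sum_univ_castLE {M : Type*} [AddCommMonoid M] {l N : ℕ} (h : l ≤ N) (F : Fin N → M) :
    ∑ i : Fin l, F (Fin.castLE h i) = ∑ j : Fin N, if (j : ℕ) < l then F j else 0 := by
  rw [← Finset.sum_filter]
  have : Finset.univ.filter (fun j : Fin N => (j : ℕ) < l)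
      = Finset.univ.map (Fin.castLEEmb h) := by
    ext j
    simp only [Finset.mem_filter, Finset.mem_univ, true_and, Finset.mem_map, Fin.castLEEmb_apply]
    exact ⟨fun hj => ⟨⟨j, hj⟩, rfl⟩, fun ⟨i, hi⟩ => hi ▸ i.isLt⟩
  rw [this, Finset.sum_map]
  rfl

section Objective

variable {H : Type*} [NormedAddCommGroup H] [InnerProductSpace ℝ H] {n : Type*} [Fintype n]
  (k : n → H) (D L : Matrix n n ℝ) (q : n → ℝ) (c γk γM : ℝ)

/-- The residuals are weighted by `D`; the objective of `stmt_11` is the case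
`D = diagonal (fun i => if i < l then 1 else 0)`, `c = l`. -/
noncomputable def manifoldRegObjective (f : H) : ℝ :=
  c⁻¹ * ((q - kernelEval k f) ⬝ᵥ D *ᵥ (q - kernelEval k f)) + γk * ⟪f, f⟫
    + γM * (kernelEval k f ⬝ᵥ L *ᵥ kernelEval k f)

variable {D L c γk γM}

lemma manifoldRegObjective_nonneg (hD : D.PosSemidef) (hL : L.PosSemidef) (hc : 0 ≤ c)
    (hγk : 0 ≤ γk) (hγM : 0 ≤ γM) (f : H) : 0 ≤ manifoldRegObjective k D L q c γk γM f := by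
  have hres := hD.dotProduct_mulVec_nonneg (q - kernelEval k f)
  have hreg := hL.dotProduct_mulVec_nonneg (kernelEval k f)
  simp only [star_trivial] at hres hreg
  unfold manifoldRegObjective
  have := real_inner_self_nonneg (x := f)
  positivity

lemma manifoldRegObjective_add (hD : D.IsSymm) (hL : L.IsSymm) (f g : H) :
    manifoldRegObjective k D L q c γk γM (f + g) = manifoldRegObjective k D L q c γk γM f
      + 2 * ((-c⁻¹ • D *ᵥ (q - kernelEval k f) + γM • L *ᵥ kernelEval k f) ⬝ᵥ kernelEval k g
        + γk * ⟪f, g⟫)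
      + manifoldRegObjective k D L 0 c γk γM g := by
  have hres : q - kernelEval k (f + g) = (q - kernelEval k f) + -kernelEval k g := by
    rw [kernelEval_add]; abel
  unfold manifoldRegObjective
  rw [hres, kernelEval_add, hD.add_dotProduct_mulVec_add, hL.add_dotProduct_mulVec_add,
    real_inner_add_add_self, zero_sub]
  simp only [add_dotProduct, smul_dotProduct, smul_eq_mul, dotProduct_neg, neg_dotProduct,
    mulVec_neg]
  ring

theorem manifoldRegObjective_sum_smul_le [DecidableEq n] (hD : D.PosSemidef) (hL : L.PosSemidef)
    (hc : 0 < c) (hγk : 0 ≤ γk) (hγM : 0 ≤ γM) (a : n → ℝ)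
    (hsol : (D * gram ℝ k + (c * γk) • (1 : Matrix n n ℝ) + (c * γM) • (L * gram ℝ k)) *ᵥ a
      = D *ᵥ q) (f : H) :
    manifoldRegObjective k D L q c γk γM (∑ i, a i • k i)
      ≤ manifoldRegObjective k D L q c γk γM f := by
  set fstar := ∑ i, a i • k i
  have hgrad :
      -c⁻¹ • D *ᵥ (q - kernelEval k fstar) + γM • L *ᵥ kernelEval k fstar + γk • a = 0 := by
    rw [kernelEval_sum_smul]
    rw [add_mulVec, add_mulVec, smul_mulVec, smul_mulVec, one_mulVec, ← mulVec_mulVec,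
      ← mulVec_mulVec] at hsol
    ext i
    have hi := congrFun hsol i
    simp only [Pi.add_apply, Pi.smul_apply, smul_eq_mul, mulVec_sub,
      Pi.sub_apply, Pi.zero_apply] at hi ⊢
    field_simp
    linarith
  have hcross := congrArg (· ⬝ᵥ kernelEval k (f - fstar)) hgrad
  simp only [add_dotProduct, smul_dotProduct, zero_dotProduct, smul_eq_mul] at hcross
  have hquad := manifoldRegObjective_nonneg k 0 hD hL hc.le hγk hγM (f - fstar)
  rw [← add_sub_cancel fstar f, manifoldRegObjective_add k q
    (isHermitian_iff_isSymm.mp hD.isHermitian) (isHermitian_iff_isSymm.mp hL.isHermitian),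
    inner_sum_smul_eq_dotProduct_kernelEval]
  simp only [add_dotProduct, smul_dotProduct, smul_eq_mul]
  linarith

end Objective

lemma sum_sq_castLE_eq_dotProduct_diagonal {l N : ℕ} (h : l ≤ N) (x : Fin N → ℝ) :
    ∑ i : Fin l, x (Fin.castLE h i) ^ 2
      = x ⬝ᵥ diagonal (fun j : Fin N => if (j : ℕ) < l then (1 : ℝ) else 0) *ᵥ x := by
  rw [Fin.sum_univ_castLE h (fun j => x j ^ 2), dotProduct]
  simp only [mulVec_diagonal]
  exact Finset.sum_congr rfl fun j _ => by split_ifs <;> ring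

/-- Correctness of the MRL estimator (Representer theorem combined with
eqs. (19)–(20)): if `a*` solves `(JK + lγₖ I + lγ_M LK) a* = q` where `K` is
the Gram matrix of the kernel sections, `L` is symmetric positive semidefinite,
`γₖ > 0` and `γ_M ≥ 0`, then `f* = Σᵢ a*ᵢ kᵢ` globally minimizes the
manifold-regularized objective over the whole space `H`. -/
theorem stmt_11 {H : Type*} [NormedAddCommGroup H] [InnerProductSpace ℝ H]
    (N l : ℕ) (hl : 1 ≤ l) (hlN : l ≤ N)
    (k : Fin N → H) (p : Fin l → ℝ)
    (L : Matrix (Fin N) (Fin N) ℝ) (hL : L.PosSemidef)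
    (γk γM : ℝ) (hγk : 0 < γk) (hγM : 0 ≤ γM)
    (K : Matrix (Fin N) (Fin N) ℝ) (hK : ∀ i j, K i j = ⟪k i, k j⟫)
    (q : Fin N → ℝ)
    (hq : ∀ i : Fin N, q i = if h : (i : ℕ) < l then p ⟨i, h⟩ else 0)
    (Jm : Matrix (Fin N) (Fin N) ℝ)
    (hJm : Jm = Matrix.diagonal (fun i : Fin N => if (i : ℕ) < l then (1 : ℝ) else 0))
    (J : H → ℝ)
    (hJ : ∀ f : H, J f =
        (1 / (l : ℝ)) * ∑ i : Fin l, (p i - ⟪f, k (Fin.castLE hlN i)⟫) ^ 2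
        + γk * ⟪f, f⟫
        + γM * ∑ i : Fin N, ∑ j : Fin N, L i j * ⟪f, k i⟫ * ⟪f, k j⟫)
    (astar : Fin N → ℝ)
    (hsol : (Jm * K + ((l : ℝ) * γk) • (1 : Matrix (Fin N) (Fin N) ℝ)
        + ((l : ℝ) * γM) • (L * K)).mulVec astar = q) :
    ∀ f : H, J (∑ i : Fin N, astar i • k i) ≤ J f := by
  have hKgram : K = gram ℝ k := ext hK
  have hJmPSD : Jm.PosSemidef := hJm ▸ PosSemidef.diagonal fun j => by
    dsimp only; split_ifs <;> norm_num
  have hJmq : Jm *ᵥ q = q := by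
    ext j
    rw [hJm, mulVec_diagonal, hq]
    split_ifs <;> simp
  have hJ_eq : ∀ f, J f = manifoldRegObjective k Jm L q l γk γM f := by
    intro f
    have hloss : ∑ i : Fin l, (p i - ⟪f, k (Fin.castLE hlN i)⟫) ^ 2
        = (q - kernelEval k f) ⬝ᵥ Jm *ᵥ (q - kernelEval k f) := by
      rw [hJm, ← sum_sq_castLE_eq_dotProduct_diagonal hlN]
      exact Finset.sum_congr rfl fun i _ => by simp [hq, kernelEval]
    have hreg : ∑ i : Fin N, ∑ j : Fin N, L i j * ⟪f, k i⟫ * ⟪f, k j⟫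
        = kernelEval k f ⬝ᵥ L *ᵥ kernelEval k f := by
      rw [dot_mulVec_eq_sum_sum, Finset.sum_comm]
      exact Finset.sum_congr rfl fun i _ => Finset.sum_congr rfl fun j _ => by
        simp only [kernelEval]; ring
    rw [hJ, hloss, hreg, one_div, manifoldRegObjective]
  intro f
  rw [hJ_eq, hJ_eq]
  exact manifoldRegObjective_sum_smul_le k q hJmPSD hL (by exact_mod_cast hl) hγk.le hγM astar
    (by rw [← hKgram, hJmq, hsol]) f
end
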